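/- arXiv:1704.05477 — 7 statements merged into one kernel-verified Lean document; each statement's English description precedes it below -/
import Mathlib

section
/- The lower and upper approximations by an ideal are idempotent: for every A ⊆ X, (A^l)^l = A^l and (A^u)^u = A^u. -/
open Set

variable {α : Type*}

/-- Predecessor neighborhood `[x]^R = {a : R x a}`. -/
def predNbhd (R : α → α → Prop) (x : α) : Set α := {a | R x a}

/-- `⟨x⟩ = ⋂ {[b]^R : b ∈ X and x ∈ [b]^R}`. -/
def minNbhd (R : α → α → Prop) (x : α) : Set α :=
  ⋂ b ∈ {b : α | x ∈ predNbhd R b}, predNbhd R b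

/-- A lattice ideal of the powerset Boolean lattice: contains `∅`, downward
closed under inclusion, and closed under binary unions. -/
def PowIdeal (I : Set (Set α)) : Prop :=
  ∅ ∈ I ∧ (∀ ⦃A B : Set α⦄, B ∈ I → A ⊆ B → A ∈ I) ∧
    ∀ ⦃A B : Set α⦄, A ∈ I → B ∈ I → A ∪ B ∈ I

/-- Lower approximation `A^l = {a ∈ A : ⟨a⟩ ∩ Aᶜ ∈ 𝕀}`. -/
def lowerI (R : α → α → Prop) (I : Set (Set α)) (A : Set α) : Set α :=
  {a | a ∈ A ∧ minNbhd R a ∩ Aᶜ ∈ I}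

/-- Upper approximation `A^u = {a : ⟨a⟩ ∩ A ∉ 𝕀} ∪ A`. -/
def upperI (R : α → α → Prop) (I : Set (Set α)) (A : Set α) : Set α :=
  {a | minNbhd R a ∩ A ∉ I} ∪ A

lemma minNbhd_mono {R : α → α → Prop} {x y : α} (hy : y ∈ minNbhd R x) :
    minNbhd R y ⊆ minNbhd R x := by
  intro z hz
  simp only [minNbhd, mem_iInter, mem_setOf_eq] at *
  intro b hb
  exact hz b (hy b hb)

theorem ideal_approx_idempotent
    (R : α → α → Prop) (hR : Reflexive R) (I : Set (Set α)) (hI : PowIdeal I) :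
    ∀ A : Set α, lowerI R I (lowerI R I A) = lowerI R I A ∧
      upperI R I (upperI R I A) = upperI R I A := by
  obtain ⟨hemp, hdown, hunion⟩ := hI
  intro A
  constructor
  · ext a
    constructor
    · rintro ⟨ha, _⟩; exact ha
    · rintro ⟨haA, haI⟩
      refine ⟨⟨haA, haI⟩, hdown haI ?_⟩
      rintro x ⟨hx1, hx2⟩
      refine ⟨hx1, ?_⟩
      intro hxA
      have : minNbhd R x ∩ Aᶜ ∈ I := hdown haI (inter_subset_inter_left _ (minNbhd_mono hx1))
      exact hx2 ⟨hxA, this⟩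
  · ext a
    constructor
    · rintro (ha | ha)
      · simp only [mem_setOf_eq] at ha
        by_contra hcon
        apply ha
        have haA : minNbhd R a ∩ A ∈ I := by
          by_contra h; exact hcon (Or.inl h)
        apply hdown haA
        rintro x ⟨hx1, hx2 | hx2⟩
        · exfalso
          exact hx2 (hdown haA (inter_subset_inter_left _ (minNbhd_mono hx1)))
        · exact ⟨hx1, hx2⟩
      · exact ha
    · intro ha; exact Or.inr ha
end

section
/- The lower and upper approximations by an ideal interact with intersections and unions as follows: for all A, B ⊆ X, (A ∩ B)^l = A^l ∩ B^l, (A ∪ B)^l ⊇ A^l ∪ B^l, (A ∪ B)^u = A^u ∪ B^u, and (A ∩ B)^u ⊆ A^u ∩ B^u. -/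
open Set

variable {α : Type*}

theorem ideal_approx_inter_union
    (R : α → α → Prop) (hR : Reflexive R) (I : Set (Set α)) (hI : PowIdeal I) :
    ∀ A B : Set α,
      lowerI R I (A ∩ B) = lowerI R I A ∩ lowerI R I B ∧
      lowerI R I A ∪ lowerI R I B ⊆ lowerI R I (A ∪ B) ∧
      upperI R I (A ∪ B) = upperI R I A ∪ upperI R I B ∧
      upperI R I (A ∩ B) ⊆ upperI R I A ∩ upperI R I B := by

  obtain ⟨-, hdown, hunion⟩ := hI
  intro A B
  refine ⟨?_, ?_, ?_, ?_⟩
  · ext a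
    simp only [lowerI, mem_setOf_eq, mem_inter_iff]
    constructor
    · rintro ⟨⟨hA, hB⟩, h⟩
      refine ⟨⟨hA, hdown h ?_⟩, hB, hdown h ?_⟩ <;>
        · intro x hx
          exact ⟨hx.1, by simp [compl_inter] at *; tauto⟩
    · rintro ⟨⟨hA, h1⟩, hB, h2⟩
      refine ⟨⟨hA, hB⟩, hdown (hunion h1 h2) ?_⟩
      rw [compl_inter, inter_union_distrib_left]
  · rintro a (⟨hA, h⟩ | ⟨hB, h⟩)
    · exact ⟨Or.inl hA, hdown h fun x hx => ⟨hx.1, fun hc => hx.2 (Or.inl hc)⟩⟩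
    · exact ⟨Or.inr hB, hdown h fun x hx => ⟨hx.1, fun hc => hx.2 (Or.inr hc)⟩⟩
  · ext a
    simp only [upperI, mem_union, mem_setOf_eq]
    rw [inter_union_distrib_left]
    constructor
    · rintro (h | hA | hB)
      · by_cases h1 : minNbhd R a ∩ A ∈ I
        · by_cases h2 : minNbhd R a ∩ B ∈ I
          · exact absurd (hunion h1 h2) h
          · exact Or.inr (Or.inl h2)
        · exact Or.inl (Or.inl h1)
      · exact Or.inl (Or.inr hA)
      · exact Or.inr (Or.inr hB)
    · rintro ((h | hA) | h | hB)
      · exact Or.inl fun hc => h (hdown hc subset_union_left)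
      · exact Or.inr (Or.inl hA)
      · exact Or.inl fun hc => h (hdown hc subset_union_right)
      · exact Or.inr (Or.inr hB)
  · rintro a (h | ⟨hA, hB⟩)
    · constructor
      · exact Or.inl fun hc => h (hdown hc (inter_subset_inter_right _ inter_subset_left))
      · exact Or.inl fun hc => h (hdown hc (inter_subset_inter_right _ inter_subset_right))
    · exact ⟨Or.inr hA, Or.inr hB⟩
end

section
/- The collection τ = {A ⊆ X : A^l = A} of sets fixed by the ideal-based lower approximation is a topology on X: it contains ∅ and X, is closed under finite intersections, and is closed under arbitrary unions. -/
open Set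

variable {α : Type*}

/- The fixed points of `A ↦ A^l` are the sets `A` with `⟨a⟩ ∩ Aᶜ ∈ 𝕀` for every `a ∈ A`. This
condition passes to unions because `𝕀` is downward closed (the complement only shrinks), and to
binary intersections because `𝕀` is closed under unions: `⟨a⟩ ∩ (A ∩ B)ᶜ` is the union of
`⟨a⟩ ∩ Aᶜ` and `⟨a⟩ ∩ Bᶜ`. -/

theorem PowIdeal.isLowerSet {I : Set (Set α)} (hI : PowIdeal I) : IsLowerSet I :=
  fun _ _ hBA hA => hI.2.1 hA hBA

section LowerApproximation

variable (R : α → α → Prop) {I : Set (Set α)}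

theorem lowerI_eq_self_iff {A : Set α} :
    lowerI R I A = A ↔ ∀ a ∈ A, minNbhd R a ∩ Aᶜ ∈ I :=
  ⟨fun h a ha => (h.symm ▸ ha : a ∈ lowerI R I A).2,
    fun h => Set.ext fun _ => ⟨And.left, fun ha => ⟨ha, h _ ha⟩⟩⟩

theorem lowerI_empty (I : Set (Set α)) : lowerI R I ∅ = ∅ :=
  (lowerI_eq_self_iff R).2 fun _ ha => ha.elim

theorem lowerI_univ (hI : ∅ ∈ I) : lowerI R I univ = univ :=
  (lowerI_eq_self_iff R).2 fun a _ => by rwa [compl_univ, inter_empty]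

theorem lowerI_inter_eq_self {A B : Set α}
    (hunion : ∀ ⦃A B : Set α⦄, A ∈ I → B ∈ I → A ∪ B ∈ I)
    (hA : lowerI R I A = A) (hB : lowerI R I B = B) : lowerI R I (A ∩ B) = A ∩ B := by
  rw [lowerI_eq_self_iff] at hA hB ⊢
  intro a ⟨haA, haB⟩
  rw [compl_inter, inter_union_distrib_left]
  exact hunion (hA a haA) (hB a haB)

theorem lowerI_sInter_eq_self {𝒮 : Set (Set α)} (hI : PowIdeal I) (h𝒮 : 𝒮.Finite)
    (hfix : ∀ A ∈ 𝒮, lowerI R I A = A) : lowerI R I (⋂₀ 𝒮) = ⋂₀ 𝒮 := by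
  induction 𝒮, h𝒮 using Set.Finite.induction_on with
  | empty => simpa using lowerI_univ R hI.1
  | @insert A 𝒮 _ _ ih =>
    rw [sInter_insert]
    exact lowerI_inter_eq_self R hI.2.2 (hfix A (mem_insert A 𝒮))
      (ih fun B hB => hfix B (mem_insert_of_mem A hB))

theorem lowerI_sUnion_eq_self {𝒮 : Set (Set α)} (hI : IsLowerSet I)
    (hfix : ∀ A ∈ 𝒮, lowerI R I A = A) : lowerI R I (⋃₀ 𝒮) = ⋃₀ 𝒮 := by
  rw [lowerI_eq_self_iff]
  rintro a ⟨A, hA𝒮, haA⟩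
  have hcompl : (⋃₀ 𝒮)ᶜ ⊆ Aᶜ := compl_subset_compl.2 (subset_sUnion_of_mem hA𝒮)
  exact hI (inter_subset_inter_right _ hcompl) ((lowerI_eq_self_iff R).1 (hfix A hA𝒮) a haA)

end LowerApproximation

theorem ideal_lower_fixed_points_form_topology_general
    (R : α → α → Prop) (I : Set (Set α)) (hI : PowIdeal I) :
    (∅ : Set α) ∈ {A : Set α | lowerI R I A = A} ∧
    (univ : Set α) ∈ {A : Set α | lowerI R I A = A} ∧
    (∀ 𝒮 : Set (Set α), 𝒮.Finite → 𝒮 ⊆ {A : Set α | lowerI R I A = A} →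
      ⋂₀ 𝒮 ∈ {A : Set α | lowerI R I A = A}) ∧
    (∀ 𝒮 : Set (Set α), 𝒮 ⊆ {A : Set α | lowerI R I A = A} →
      ⋃₀ 𝒮 ∈ {A : Set α | lowerI R I A = A}) :=
  ⟨lowerI_empty R I, lowerI_univ R hI.1,
    fun _ h𝒮 hfix => lowerI_sInter_eq_self R hI h𝒮 hfix,
    fun _ hfix => lowerI_sUnion_eq_self R hI.isLowerSet hfix⟩

theorem ideal_lower_fixed_points_form_topology
    (R : α → α → Prop) (hR : Reflexive R) (I : Set (Set α)) (hI : PowIdeal I) :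
    (∅ : Set α) ∈ {A : Set α | lowerI R I A = A} ∧
    (univ : Set α) ∈ {A : Set α | lowerI R I A = A} ∧
    (∀ 𝒮 : Set (Set α), 𝒮.Finite → 𝒮 ⊆ {A : Set α | lowerI R I A = A} →
      ⋂₀ 𝒮 ∈ {A : Set α | lowerI R I A = A}) ∧
    (∀ 𝒮 : Set (Set α), 𝒮 ⊆ {A : Set α | lowerI R I A = A} →
      ⋃₀ 𝒮 ∈ {A : Set α | lowerI R I A = A}) :=
  ideal_lower_fixed_points_form_topology_general R I hI
end

section
/- Suppose H is L-directed, i.e. L(a,b) ≠ ∅ for all a, b ∈ H. If K is a prime σ-ideal and K₁, K₂ are σ-ideals with K₁ ∩ K₂ ⊆ K, then K₁ ⊆ K or K₂ ⊆ K. -/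
open Set

variable {α : Type*}

/-- Principal up-set `U(a,b) = {x : σ a x ∧ σ b x}`. -/
def ub (σ : α → α → Prop) (a b : α) : Set α := {x | σ a x ∧ σ b x}

/-- Principal down-set `L(a,b) = {x : σ x a ∧ σ x b}`. -/
def lb (σ : α → α → Prop) (a b : α) : Set α := {x | σ x a ∧ σ x b}

/-- `K` is a σ-ideal: downward closed under `σ` and U-directed within `K`. -/
def SIdeal (σ : α → α → Prop) (K : Set α) : Prop :=
  (∀ ⦃x a : α⦄, a ∈ K → σ x a → x ∈ K) ∧
    ∀ ⦃a : α⦄, a ∈ K → ∀ ⦃b : α⦄, b ∈ K → (ub σ a b ∩ K).Nonempty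

/-- A σ-ideal is prime if meeting every lower bound set forces membership. -/
def SPrime (σ : α → α → Prop) (K : Set α) : Prop :=
  SIdeal σ K ∧ ∀ a b : α, (lb σ a b ∩ K).Nonempty → a ∈ K ∨ b ∈ K

theorem prime_sIdeal_property (σ : α → α → Prop)
    (hLdir : ∀ a b : α, (lb σ a b).Nonempty)
    (K K₁ K₂ : Set α) (hK : SPrime σ K) (hK₁ : SIdeal σ K₁) (hK₂ : SIdeal σ K₂)
    (hsub : K₁ ∩ K₂ ⊆ K) :
    K₁ ⊆ K ∨ K₂ ⊆ K := by
  by_contra h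
  push_neg at h
  obtain ⟨h1, h2⟩ := h
  obtain ⟨a, ha1, haK⟩ := not_subset.1 h1
  obtain ⟨b, hb2, hbK⟩ := not_subset.1 h2
  obtain ⟨c, hca, hcb⟩ := hLdir a b
  have hc1 : c ∈ K₁ := hK₁.1 ha1 hca
  have hc2 : c ∈ K₂ := hK₂.1 hb2 hcb
  have hcK : c ∈ K := hsub ⟨hc1, hc2⟩
  rcases hK.2 a b ⟨c, ⟨hca, hcb⟩, hcK⟩ with h | h
  · exact haK h
  · exact hbK h
end

section
/- If σ is supremal, then for every subset Y ⊆ H the generated σ-ideal exists: the intersection of all σ-ideals containing Y is itself a σ-ideal containing Y (hence the least one). In particular H is σ-principal: ⟨a⟩ exists for every a ∈ H. -/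
open Set

variable {α : Type*}

/-- `s` is a σ-supremum of `a` and `b`. -/
def SSup (σ : α → α → Prop) (a b s : α) : Prop :=
  s ∈ ub σ a b ∧ ∀ x ∈ ub σ a b, s = x ∨ σ s x

/-- `σ` is supremal: every pair has a σ-supremum. -/
def Supremal (σ : α → α → Prop) : Prop := ∀ a b : α, ∃ s : α, SSup σ a b s

/-- `K` is the least σ-ideal containing `Y`. -/
def LeastSIdealOn (σ : α → α → Prop) (Y K : Set α) : Prop :=
  SIdeal σ K ∧ Y ⊆ K ∧ ∀ ⦃J : Set α⦄, SIdeal σ J → Y ⊆ J → K ⊆ J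

/-- The intersection of all σ-ideals containing `Y`. -/
def genIdeal (σ : α → α → Prop) (Y : Set α) : Set α :=
  ⋂₀ {K : Set α | SIdeal σ K ∧ Y ⊆ K}


theorem genIdeal_is_least_sIdeal_of_supremal (σ : α → α → Prop) (hσ : Supremal σ) :
    (∀ Y : Set α, LeastSIdealOn σ Y (genIdeal σ Y)) ∧
    ∀ a : α, ∃ K : Set α, LeastSIdealOn σ {a} K := by
  have main : ∀ Y : Set α, LeastSIdealOn σ Y (genIdeal σ Y) := by
    intro Y
    refine ⟨⟨?_, ?_⟩, ?_, ?_⟩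
    · intro x a ha hxa K hK
      exact hK.1.1 (ha K hK) hxa
    · intro a ha b hb
      obtain ⟨s, hs, hsup⟩ := hσ a b
      refine ⟨s, hs, ?_⟩
      intro K hK
      obtain ⟨u, hu, huK⟩ := hK.1.2 (ha K hK) (hb K hK)
      rcases hsup u hu with rfl | h
      · exact huK
      · exact hK.1.1 huK h
    · intro y hy K hK
      exact hK.2 hy
    · intro J hJ hYJ x hx
      exact hx J ⟨hJ, hYJ⟩
  exact ⟨main, fun a => ⟨genIdeal σ {a}, main {a}⟩⟩
end

section
/- If σ is total, i.e. for all a, b ∈ H either σ a b or σ b a, then: (1) for every a ∈ H the set {x ∈ H : τ(σ) x a} is the least σ-ideal containing a, where τ(σ) is the transitive closure of σ (so H is σ-principal); and (2) the collection of all σ-ideals of H is totally ordered by inclusion. -/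
open Set

variable {α : Type*}

/-! For a total relation every down-closed set is directed (the larger of two elements is a common
upper bound, by reflexivity), so the σ-ideals are exactly the down-closed sets. Down-closed sets
under a total relation form a chain, and the least down-closed set containing `a` is the set of
`τ(σ)`-predecessors of `a`. -/

section Total

variable {σ : α → α → Prop} {K K₁ K₂ : Set α}

theorem SIdeal.of_total (htot : ∀ a b : α, σ a b ∨ σ b a)
    (hdown : ∀ ⦃x a : α⦄, a ∈ K → σ x a → x ∈ K) : SIdeal σ K := by
  have hrefl : ∀ a, σ a a := fun a => (htot a a).elim id id
  refine ⟨hdown, fun b hb c hc => ?_⟩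
  rcases htot b c with hbc | hcb
  · exact ⟨c, ⟨hbc, hrefl c⟩, hc⟩
  · exact ⟨b, ⟨hrefl b, hcb⟩, hb⟩

theorem SIdeal.mem_of_transGen (hK : SIdeal σ K) {x a : α} (ha : a ∈ K)
    (hxa : Relation.TransGen σ x a) : x ∈ K := by
  induction hxa using Relation.TransGen.head_induction_on with
  | single h => exact hK.1 ha h
  | head h _ ih => exact hK.1 ih h

theorem sIdeal_transGen_of_total (htot : ∀ a b : α, σ a b ∨ σ b a) (a : α) :
    SIdeal σ {x | Relation.TransGen σ x a} :=
  SIdeal.of_total htot fun _ _ hb hxb => Relation.TransGen.head hxb hb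

theorem leastSIdealOn_singleton_transGen_of_total (htot : ∀ a b : α, σ a b ∨ σ b a) (a : α) :
    LeastSIdealOn σ {a} {x | Relation.TransGen σ x a} :=
  ⟨sIdeal_transGen_of_total htot a,
    singleton_subset_iff.mpr (.single ((htot a a).elim id id)),
    fun _ hJ haJ _ hx => hJ.mem_of_transGen (singleton_subset_iff.mp haJ) hx⟩

theorem SIdeal.subset_or_subset_of_total (htot : ∀ a b : α, σ a b ∨ σ b a)
    (h₁ : SIdeal σ K₁) (h₂ : SIdeal σ K₂) : K₁ ⊆ K₂ ∨ K₂ ⊆ K₁ := by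
  refine or_iff_not_imp_left.mpr fun hsub => ?_
  obtain ⟨b, hb₁, hb₂⟩ := not_subset.mp hsub
  intro c hc
  rcases htot b c with hbc | hcb
  · exact absurd (h₂.1 hc hbc) hb₂
  · exact h₁.1 hb₁ hcb

end Total

theorem total_relation_principal_and_chain (σ : α → α → Prop)
    (htot : ∀ a b : α, σ a b ∨ σ b a) :
    (∀ a : α, LeastSIdealOn σ {a} {x : α | Relation.TransGen σ x a}) ∧
    ∀ K₁ K₂ : Set α, SIdeal σ K₁ → SIdeal σ K₂ → K₁ ⊆ K₂ ∨ K₂ ⊆ K₁ :=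
  ⟨leastSIdealOn_singleton_transGen_of_total htot,
    fun _ _ h₁ h₂ => h₁.subset_or_subset_of_total htot h₂⟩
end

section
/- The following are equivalent: (1) for every a ∈ H, the set {b ∈ H : σ b a} is the least σ-ideal containing a; (2) σ is a quasi order, i.e. reflexive and transitive. -/
open Set

variable {α : Type*}

theorem principal_down_sets_iff_quasiorder (σ : α → α → Prop) :
    (∀ a : α, LeastSIdealOn σ {a} {b : α | σ b a}) ↔
      (Reflexive σ ∧ Transitive σ) := by
  constructor
  · intro h
    constructor
    · intro a
      exact (h a).2.1 rfl
    · intro x y z hxy hyz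
      obtain ⟨⟨hdown, _⟩, _⟩ := h z
      exact hdown hyz hxy
  · rintro ⟨hrefl, htrans⟩ a
    refine ⟨⟨fun x b hb hxb => htrans hxb hb, fun b hb c hc => ⟨a, ⟨hb, hc⟩, hrefl a⟩⟩,
      fun x hx => by simp only [Set.mem_singleton_iff] at hx; subst hx; exact hrefl _, fun J hJ haJ b hb => hJ.1 (haJ rfl) hb⟩
end
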